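/- arXiv:2212.09413 — 3 statements merged into one kernel-verified Lean document; each statement's English description precedes it below -/
import Mathlib

section
/- For the subgradient method w^{t+1} = w^t - η_t g^t applied to a convex function F with subgradients bounded by M, the weighted average ŵ := (1/S_T) Σ_{t=0}^T η_t w^t with S_T = Σ_{t=0}^T η_t satisfies F(ŵ) - F(w⋆) ≤ ‖w^0 - w⋆‖²/(2 S_T) + (M²/(2 S_T)) Σ_{t=0}^T η_t². -/
open scoped RealInnerProductSpace

theorem subgradient_method_average_bound {p : ℕ}
    (F : EuclideanSpace ℝ (Fin p) → ℝ) (hconv : ConvexOn ℝ Set.univ F)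
    (wstar : EuclideanSpace ℝ (Fin p)) (hmin : ∀ z, F wstar ≤ F z)
    (w g : ℕ → EuclideanSpace ℝ (Fin p)) (η : ℕ → ℝ) (M : ℝ)
    (hη : ∀ t, 0 < η t)
    (hsub : ∀ t, ∀ z, F (w t) + ⟪g t, z - w t⟫ ≤ F z)
    (hgM : ∀ t, ‖g t‖ ≤ M)
    (hupd : ∀ t, w (t + 1) = w t - η t • g t) (T : ℕ)
    (S : ℝ) (hS : S = ∑ t ∈ Finset.range (T + 1), η t)
    (what : EuclideanSpace ℝ (Fin p))
    (hwhat : what = S⁻¹ • ∑ t ∈ Finset.range (T + 1), η t • w t) :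
    F what - F wstar ≤
      ‖w 0 - wstar‖ ^ 2 / (2 * S)
        + M ^ 2 / (2 * S) * ∑ t ∈ Finset.range (T + 1), (η t) ^ 2 := by
  have hSpos : 0 < S := by
    rw [hS]
    exact Finset.sum_pos (fun t _ => hη t) (Finset.nonempty_range_add_one)
  -- per-step inequality
  have step : ∀ t, η t * (F (w t) - F wstar) ≤
      (‖w t - wstar‖ ^ 2 - ‖w (t + 1) - wstar‖ ^ 2) / 2 + η t ^ 2 * M ^ 2 / 2 := by
    intro t
    have hsg : F (w t) - F wstar ≤ ⟪g t, w t - wstar⟫ := by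
      have := hsub t wstar
      have h := real_inner_smul_right (g t) (wstar - w t) (-1)
      nlinarith [real_inner_smul_right (g t) (w t - wstar) (1 : ℝ),
        inner_neg_right (𝕜 := ℝ) (g t) (w t - wstar),
        inner_sub_right (𝕜 := ℝ) (g t) (w t) wstar,
        inner_sub_right (𝕜 := ℝ) (g t) wstar (w t)]
    have hexp : ‖w (t + 1) - wstar‖ ^ 2 =
        ‖w t - wstar‖ ^ 2 - 2 * η t * ⟪g t, w t - wstar⟫ + η t ^ 2 * ‖g t‖ ^ 2 := by
      rw [hupd t]
      have : w t - η t • g t - wstar = (w t - wstar) - η t • g t := by abel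
      rw [this, norm_sub_sq_real, norm_smul, real_inner_smul_right,
        real_inner_comm]
      simp [Real.norm_eq_abs, mul_pow, sq_abs]
      ring
    have hg2 : ‖g t‖ ^ 2 ≤ M ^ 2 := by
      have := hgM t
      nlinarith [norm_nonneg (g t)]
    nlinarith [hη t, sq_nonneg (η t)]
  -- summed inequality with telescoping
  have sum_step : ∑ t ∈ Finset.range (T + 1), η t * (F (w t) - F wstar) ≤
      ‖w 0 - wstar‖ ^ 2 / 2 + M ^ 2 / 2 * ∑ t ∈ Finset.range (T + 1), η t ^ 2 := by
    have h1 : ∑ t ∈ Finset.range (T + 1), η t * (F (w t) - F wstar) ≤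
        ∑ t ∈ Finset.range (T + 1),
          ((‖w t - wstar‖ ^ 2 - ‖w (t + 1) - wstar‖ ^ 2) / 2 + η t ^ 2 * M ^ 2 / 2) :=
      Finset.sum_le_sum fun t _ => step t
    have h2 : ∑ t ∈ Finset.range (T + 1),
        ((‖w t - wstar‖ ^ 2 - ‖w (t + 1) - wstar‖ ^ 2) / 2 + η t ^ 2 * M ^ 2 / 2) =
        (‖w 0 - wstar‖ ^ 2 - ‖w (T + 1) - wstar‖ ^ 2) / 2
          + M ^ 2 / 2 * ∑ t ∈ Finset.range (T + 1), η t ^ 2 := by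
      rw [Finset.sum_add_distrib, Finset.mul_sum]
      congr 1
      · rw [← Finset.sum_div]
        congr 1
        have := Finset.sum_range_sub' (fun t => ‖w t - wstar‖ ^ 2) (T + 1)
        simpa using this
      · exact Finset.sum_congr rfl fun t _ => by ring
    have h3 : (0:ℝ) ≤ ‖w (T + 1) - wstar‖ ^ 2 := sq_nonneg _
    linarith
  -- Jensen
  have hwsum : ∑ t ∈ Finset.range (T + 1), η t / S = 1 := by
    rw [← Finset.sum_div, ← hS, div_self hSpos.ne']
  have hwhat' : what = ∑ t ∈ Finset.range (T + 1), (η t / S) • w t := by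
    rw [hwhat, Finset.smul_sum]
    exact Finset.sum_congr rfl fun t _ => by rw [smul_smul]; ring_nf
  have jensen : F what ≤ ∑ t ∈ Finset.range (T + 1), (η t / S) * F (w t) := by
    rw [hwhat']
    exact hconv.map_sum_le (fun t _ => div_nonneg (hη t).le hSpos.le) hwsum (fun t _ => Set.mem_univ _)
  have key : S * (F what - F wstar) ≤ ∑ t ∈ Finset.range (T + 1), η t * (F (w t) - F wstar) := by
    have : S * F what ≤ ∑ t ∈ Finset.range (T + 1), η t * F (w t) := by
      calc S * F what ≤ S * ∑ t ∈ Finset.range (T + 1), (η t / S) * F (w t) :=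
            mul_le_mul_of_nonneg_left jensen hSpos.le
        _ = ∑ t ∈ Finset.range (T + 1), η t * F (w t) := by
            rw [Finset.mul_sum]
            exact Finset.sum_congr rfl fun t _ => by
              field_simp
    have hsum2 : ∑ t ∈ Finset.range (T + 1), η t * (F (w t) - F wstar)
        = (∑ t ∈ Finset.range (T + 1), η t * F (w t)) - S * F wstar := by
      rw [hS, Finset.sum_mul, ← Finset.sum_sub_distrib]
      exact Finset.sum_congr rfl fun t _ => by ring
    rw [hsum2]
    linarith
  have final := le_trans key sum_step
  have heq : ‖w 0 - wstar‖ ^ 2 / (2 * S)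
      + M ^ 2 / (2 * S) * ∑ t ∈ Finset.range (T + 1), (η t) ^ 2
      = (‖w 0 - wstar‖ ^ 2 / 2 + M ^ 2 / 2 * ∑ t ∈ Finset.range (T + 1), η t ^ 2) / S := by
    field_simp
  rw [heq, le_div_iff₀ hSpos]
  linarith
end

section
/- For Nesterov's accelerated gradient method on a convex L-smooth function F with parameters θ_t satisfying θ_t ≥ 1, θ_0 = 1, and θ_t(θ_t - 1) ≤ θ_{t-1}², the potential D_t := θ_{t-1}²(F(w^t) - F(w⋆)) + (L/2)‖u^t - w⋆‖² is nonincreasing, where the iterates are z^t := (1 - 1/θ_t)w^t + (1/θ_t)u^t, w^{t+1} := z^t - (1/L)∇F(z^t), u^{t+1} := u^t - (θ_t/L)∇F(z^t). -/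
/-! Three inequalities at `z = z^t`, with `g = ∇F z`, give the decrease: the descent lemma for the
gradient step, `F w^{t+1} ≤ F z - ‖g‖² / (2L)`, and the first-order convexity inequalities towards
`w^t` and `w⋆`. Weighting the latter by `θ_t - 1` and `1`, their linear terms add up to
`⟪g, w⋆ - u^t⟫` because `θ_t z = (θ_t - 1) w^t + u^t`, and this is the cross term in
`(L/2)‖u^{t+1} - w⋆‖²`; the `‖g‖²` terms cancel. What is left is
`θ_t (θ_t - 1) (F w^t - F w⋆) ≤ θ_{t-1}² (F w^t - F w⋆)`. -/

open Set InnerProductSpace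

section NormedSpace

variable {E : Type*} [NormedAddCommGroup E] [NormedSpace ℝ E] {f : E → ℝ}

theorem ConvexOn.apply_add_le_of_hasFDerivAt {s : Set E} (hf : ConvexOn ℝ s f) {x y : E}
    (hx : x ∈ s) (hy : y ∈ s) {f' : E →L[ℝ] ℝ} (hf' : HasFDerivAt f f' x) :
    f x + f' (y - x) ≤ f y := by
  have hline : ConvexOn ℝ (Icc 0 1) (f ∘ AffineMap.lineMap (k := ℝ) x y) :=
    (hf.comp_affineMap _).subset (fun t ht => hf.1.lineMap_mem hx hy ht) (convex_Icc 0 1)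
  have hderiv : HasDerivAt (f ∘ AffineMap.lineMap (k := ℝ) x y) (f' (y - x)) 0 := by
    simpa using hf'.comp_hasDerivAt_of_eq 0 AffineMap.hasDerivAt_lineMap (by simp)
  have := hline.le_slope_of_hasDerivAt (by simp) (by simp) one_pos hderiv
  simp only [slope_def_field, Function.comp_apply, AffineMap.lineMap_apply_one,
    AffineMap.lineMap_apply_zero, sub_zero, div_one] at this
  linarith

-- `f` lies below the quadratic majorant along the segment, by comparing derivatives on `[0, 1]`.
theorem apply_le_add_fderiv_add_sq_of_lipschitz {f' : E → E →L[ℝ] ℝ} {L : ℝ}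
    (hf : ∀ x, HasFDerivAt f (f' x) x) (hlip : ∀ x y, ‖f' x - f' y‖ ≤ L * ‖x - y‖) (x y : E) :
    f y ≤ f x + f' x (y - x) + L / 2 * ‖y - x‖ ^ 2 := by
  set φ := f ∘ AffineMap.lineMap (k := ℝ) x y
  have hφ : ∀ t, HasDerivAt φ (f' (AffineMap.lineMap (k := ℝ) x y t) (y - x)) t := fun t =>
    (hf _).comp_hasDerivAt t AffineMap.hasDerivAt_lineMap
  set B : ℝ → ℝ := fun t => f x + t * f' x (y - x) + L / 2 * t ^ 2 * ‖y - x‖ ^ 2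
  have hB : ∀ t, HasDerivAt B (f' x (y - x) + L * t * ‖y - x‖ ^ 2) t := by
    intro t
    refine ((((hasDerivAt_id t).mul_const (f' x (y - x))).const_add (f x)).add
      (((hasDerivAt_pow 2 t).const_mul (L / 2)).mul_const (‖y - x‖ ^ 2))).congr_deriv ?_
    simp only [Nat.cast_ofNat, Nat.add_one_sub_one, pow_one]
    ring
  have hbound : ∀ t ∈ Ico (0 : ℝ) 1,
      f' (AffineMap.lineMap (k := ℝ) x y t) (y - x) ≤ f' x (y - x) + L * t * ‖y - x‖ ^ 2 := by
    intro t ht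
    calc f' (AffineMap.lineMap (k := ℝ) x y t) (y - x)
        = f' x (y - x) + (f' (AffineMap.lineMap (k := ℝ) x y t) - f' x) (y - x) := by simp
      _ ≤ f' x (y - x) + ‖f' (AffineMap.lineMap (k := ℝ) x y t) - f' x‖ * ‖y - x‖ := by
        gcongr; exact (Real.le_norm_self _).trans (ContinuousLinearMap.le_opNorm _ _)
      _ ≤ f' x (y - x) + L * ‖AffineMap.lineMap (k := ℝ) x y t - x‖ * ‖y - x‖ := by
        gcongr; exact hlip _ _
      _ = f' x (y - x) + L * t * ‖y - x‖ ^ 2 := by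
        rw [AffineMap.lineMap_apply_module', add_sub_cancel_right, norm_smul,
          Real.norm_of_nonneg ht.1]
        ring
  have := image_le_of_deriv_right_le_deriv_boundary (a := 0) (b := 1)
    (fun t _ => (hφ t).continuousAt.continuousWithinAt)
    (fun t _ => (hφ t).hasDerivWithinAt) (by simp [φ, B])
    (fun t _ => (hB t).continuousAt.continuousWithinAt) (fun t _ => (hB t).hasDerivWithinAt)
    hbound (right_mem_Icc.2 zero_le_one)
  simpa [φ, B] using this

end NormedSpace

section InnerProductSpace

variable {E : Type*} [NormedAddCommGroup E] [InnerProductSpace ℝ E] [CompleteSpace E]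
  {f : E → ℝ}

theorem ConvexOn.apply_add_inner_gradient_le (hf : ConvexOn ℝ univ f) {x : E}
    (hd : DifferentiableAt ℝ f x) (y : E) : f x + ⟪gradient f x, y - x⟫_ℝ ≤ f y :=
  hf.apply_add_le_of_hasFDerivAt (mem_univ x) (mem_univ y) hd.hasGradientAt.hasFDerivAt

theorem apply_sub_smul_gradient_le {L : ℝ} (hL : 0 < L) (hd : Differentiable ℝ f)
    (hlip : ∀ x y, ‖gradient f x - gradient f y‖ ≤ L * ‖x - y‖) (x : E) :
    f (x - (1 / L) • gradient f x) ≤ f x - ‖gradient f x‖ ^ 2 / (2 * L) := by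
  have h := apply_le_add_fderiv_add_sq_of_lipschitz (f' := fun x => toDual ℝ E (gradient f x))
    (fun x => (hd x).hasGradientAt.hasFDerivAt)
    (fun x y => by rw [← map_sub, LinearIsometryEquiv.norm_map]; exact hlip x y)
    x (x - (1 / L) • gradient f x)
  rw [sub_sub_cancel_left, toDual_apply_apply, inner_neg_right, real_inner_smul_right,
    real_inner_self_eq_norm_sq, norm_neg, norm_smul, Real.norm_of_nonneg (by positivity)] at h
  convert h using 1
  field_simp
  ring

theorem nesterov_step_potential_le {L : ℝ} (hL : 0 < L) (hd : Differentiable ℝ f)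
    (hf : ConvexOn ℝ univ f) (hlip : ∀ x y, ‖gradient f x - gradient f y‖ ≤ L * ‖x - y‖)
    {a b : ℝ} (ha : 1 ≤ a) (hab : a * (a - 1) ≤ b ^ 2) {w u z wstar : E}
    (hz : a • z = (a - 1) • w + u) (hmin : f wstar ≤ f w) :
    a ^ 2 * (f (z - (1 / L) • gradient f z) - f wstar)
        + L / 2 * ‖u - (a / L) • gradient f z - wstar‖ ^ 2
      ≤ b ^ 2 * (f w - f wstar) + L / 2 * ‖u - wstar‖ ^ 2 := by
  set g := gradient f z
  have hstep := apply_sub_smul_gradient_le hL hd hlip z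
  have hw := hf.apply_add_inner_gradient_le (hd z) w
  have hstar := hf.apply_add_inner_gradient_le (hd z) wstar
  have hcomb : (a - 1) * ⟪g, w - z⟫_ℝ + ⟪g, wstar - z⟫_ℝ = -⟪g, u - wstar⟫_ℝ := by
    rw [← real_inner_smul_right, ← inner_add_right, ← inner_neg_right]
    congr 1
    linear_combination (norm := module) -hz
  have hnorm : L / 2 * ‖u - (a / L) • g - wstar‖ ^ 2
      = L / 2 * ‖u - wstar‖ ^ 2 - a * ⟪g, u - wstar⟫_ℝ + a ^ 2 * (‖g‖ ^ 2 / (2 * L)) := by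
    rw [sub_right_comm, norm_sub_sq_real, real_inner_smul_right, norm_smul,
      Real.norm_of_nonneg (by positivity), real_inner_comm]
    field_simp
  rw [hnorm]
  nlinarith [mul_le_mul_of_nonneg_left hstep (sq_nonneg a),
    mul_le_mul_of_nonneg_left hw (by nlinarith : 0 ≤ a * (a - 1)),
    mul_le_mul_of_nonneg_left hstar (by linarith : 0 ≤ a),
    mul_le_mul_of_nonneg_right hab (sub_nonneg.2 hmin)]

end InnerProductSpace

/-- `θp t` stands for `θ_{t-1}`. -/
theorem nesterov_potential_nonincreasing_general {p : ℕ}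
    (F : EuclideanSpace ℝ (Fin p) → ℝ)
    (L : ℝ) (hL : 0 < L) (hdiff : Differentiable ℝ F)
    (hconv : ConvexOn ℝ Set.univ F)
    (hlip : ∀ w w' : EuclideanSpace ℝ (Fin p),
      ‖gradient F w - gradient F w'‖ ≤ L * ‖w - w'‖)
    (wstar : EuclideanSpace ℝ (Fin p)) (hmin : ∀ z, F wstar ≤ F z)
    (θ : ℕ → ℝ) (hθ1 : ∀ t, 1 ≤ θ t)
    (θp : ℕ → ℝ) (hθp : ∀ t, θp (t + 1) = θ t)
    (hcond : ∀ t, θ t * (θ t - 1) ≤ (θp t) ^ 2)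
    (w u z : ℕ → EuclideanSpace ℝ (Fin p))
    (hz : ∀ t, z t = (1 - 1 / θ t) • w t + (1 / θ t) • u t)
    (hw : ∀ t, w (t + 1) = z t - (1 / L) • gradient F (z t))
    (hu : ∀ t, u (t + 1) = u t - (θ t / L) • gradient F (z t))
    (D : ℕ → ℝ)
    (hD : ∀ t, D t = (θp t) ^ 2 * (F (w t) - F wstar) + L / 2 * ‖u t - wstar‖ ^ 2) :
    ∀ t : ℕ, D (t + 1) ≤ D t := by
  intro t
  have hθt : θ t ≠ 0 := (zero_lt_one.trans_le (hθ1 t)).ne'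
  have hzt : θ t • z t = (θ t - 1) • w t + u t := by
    rw [hz t, smul_add, smul_smul, smul_smul, mul_one_sub, mul_one_div_cancel hθt, one_smul]
  rw [hD, hD, hθp, hw, hu]
  exact nesterov_step_potential_le hL hdiff hconv hlip (hθ1 t) (hcond t) hzt (hmin _)

/-- Nesterov's accelerated gradient method: the potential
`D t = θ_{t-1}² (F w^t - F w⋆) + (L/2)‖u^t - w⋆‖²` is nonincreasing.
Here `θp t` denotes `θ_{t-1}`, with `θp 0 = θ_{-1} = 1/2`. -/
theorem nesterov_potential_nonincreasing {p : ℕ}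
    (F : EuclideanSpace ℝ (Fin p) → ℝ)
    (L : ℝ) (hL : 0 < L) (hdiff : Differentiable ℝ F)
    (hconv : ConvexOn ℝ Set.univ F)
    (hlip : ∀ w w' : EuclideanSpace ℝ (Fin p),
      ‖gradient F w - gradient F w'‖ ≤ L * ‖w - w'‖)
    (wstar : EuclideanSpace ℝ (Fin p)) (hmin : ∀ z, F wstar ≤ F z)
    (θ : ℕ → ℝ) (hθ1 : ∀ t, 1 ≤ θ t) (hθ0 : θ 0 = 1)
    (θp : ℕ → ℝ) (hθp0 : θp 0 = 1 / 2) (hθp : ∀ t, θp (t + 1) = θ t)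
    (hcond : ∀ t, θ t * (θ t - 1) ≤ (θp t) ^ 2)
    (w u z : ℕ → EuclideanSpace ℝ (Fin p)) (hinit : w 0 = u 0)
    (hz : ∀ t, z t = (1 - 1 / θ t) • w t + (1 / θ t) • u t)
    (hw : ∀ t, w (t + 1) = z t - (1 / L) • gradient F (z t))
    (hu : ∀ t, u (t + 1) = u t - (θ t / L) • gradient F (z t))
    (D : ℕ → ℝ)
    (hD : ∀ t, D t = (θp t) ^ 2 * (F (w t) - F wstar) + L / 2 * ‖u t - wstar‖ ^ 2) :
    ∀ t : ℕ, D (t + 1) ≤ D t :=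
  nesterov_potential_nonincreasing_general F L hL hdiff hconv hlip wstar hmin θ hθ1 θp hθp hcond w u
    z hz hw hu D hD
end

section
/- Nesterov's accelerated gradient method on a convex L-smooth function F with θ_{t-1} := (t+1)/2 achieves F(w^t) - F(w⋆) ≤ 2L‖w^0 - w⋆‖²/(t+1)² for all t ≥ 1. -/
/-!
The energy `θ_{t-1}² (F w^t - F w⋆) + L/2 ‖u^t - w⋆‖²` does not increase along the iteration.
In one step, the gradient step lowers `F` by `‖∇F z‖² / (2L)`; convexity at `z`, applied towards
`w` and towards `w⋆` and combined through `θ z = (θ - 1) w + u`, bounds `θ F z`; and the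
`‖∇F z‖²` term created by the update of `u` cancels the gain of the gradient step exactly.
The schedule `θ_t = (t + 2) / 2` satisfies `θ_t (θ_t - 1) ≤ θ_{t-1}²` and `θ_0 = 1`, so the energy
is bounded by its initial value `L/2 ‖w^0 - w⋆‖²`.
-/

open Set InnerProductSpace

section Smooth

variable {E : Type*} [NormedAddCommGroup E] [InnerProductSpace ℝ E] [CompleteSpace E] {F : E → ℝ}

lemma hasDerivAt_comp_add_smul {x v : E} {s : ℝ} (hF : DifferentiableAt ℝ F (x + s • v)) :
    HasDerivAt (fun r : ℝ ↦ F (x + r • v)) ⟪gradient F (x + s • v), v⟫_ℝ s := by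
  have hline : HasDerivAt (fun r : ℝ ↦ x + r • v) v s := by
    simpa using ((hasDerivAt_id s).smul_const v).const_add x
  simpa [Function.comp_def] using hF.hasGradientAt.hasFDerivAt.comp_hasDerivAt s hline

lemma ConvexOn.add_inner_gradient_le (hconv : ConvexOn ℝ univ F) {x : E}
    (hF : DifferentiableAt ℝ F x) (y : E) : F x + ⟪gradient F x, y - x⟫_ℝ ≤ F y := by
  have hline : ConvexOn ℝ univ (fun s : ℝ ↦ F (x + s • (y - x))) := by
    have h := hconv.comp_affineMap (AffineMap.lineMap x y)
    simp only [preimage_univ, Function.comp_def, AffineMap.lineMap_apply_module'] at h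
    simpa only [add_comm x] using h
  have hslope := hline.le_slope_of_hasDerivAt (mem_univ 0) (mem_univ 1) zero_lt_one
    (hasDerivAt_comp_add_smul (by simpa using hF))
  simp only [slope_def_field, zero_smul, add_zero, one_smul, add_sub_cancel, sub_zero,
    div_one] at hslope
  linarith

variable {L : ℝ}

lemma le_add_inner_gradient_add_norm_sq (hF : Differentiable ℝ F)
    (hlip : ∀ w w' : E, ‖gradient F w - gradient F w'‖ ≤ L * ‖w - w'‖) (x v : E) :
    F (x + v) ≤ F x + ⟪gradient F x, v⟫_ℝ + L / 2 * ‖v‖ ^ 2 := by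
  set φ : ℝ → ℝ := fun s ↦ s * ⟪gradient F x, v⟫_ℝ + L / 2 * s ^ 2 * ‖v‖ ^ 2 - F (x + s • v)
  have hφ : ∀ s, HasDerivAt φ
      (⟪gradient F x, v⟫_ℝ + L * s * ‖v‖ ^ 2 - ⟪gradient F (x + s • v), v⟫_ℝ) s := by
    intro s
    have hquad := (((hasDerivAt_id s).pow 2).const_mul (L / 2)).mul_const (‖v‖ ^ 2)
    refine (((hasDerivAt_id s).mul_const _).add hquad).sub
      (hasDerivAt_comp_add_smul (hF _)) |>.congr_deriv ?_
    simp only [id, Nat.cast_ofNat]; ring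
  have hmono : MonotoneOn φ (Icc 0 1) := by
    refine monotoneOn_of_deriv_nonneg (convex_Icc 0 1)
      (fun s _ ↦ (hφ s).continuousAt.continuousWithinAt)
      (fun s _ ↦ (hφ s).differentiableAt.differentiableWithinAt) fun s hs ↦ ?_
    rw [interior_Icc] at hs
    have hgrad : ⟪gradient F (x + s • v) - gradient F x, v⟫_ℝ ≤ L * s * ‖v‖ ^ 2 :=
      calc _ ≤ ‖gradient F (x + s • v) - gradient F x‖ * ‖v‖ := real_inner_le_norm _ _
        _ ≤ L * ‖x + s • v - x‖ * ‖v‖ := by gcongr; exact hlip _ _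
        _ = L * s * ‖v‖ ^ 2 := by
          rw [add_sub_cancel_left, norm_smul, Real.norm_of_nonneg hs.1.le]; ring
    rw [inner_sub_left] at hgrad
    rw [(hφ s).deriv]
    linarith
  have h01 := hmono (left_mem_Icc.2 zero_le_one) (right_mem_Icc.2 zero_le_one) zero_le_one
  simp only [φ, zero_mul, zero_smul, add_zero, one_smul, one_mul, ne_eq, OfNat.ofNat_ne_zero,
    not_false_eq_true, zero_pow, mul_zero, zero_sub, one_pow, mul_one] at h01
  linarith

lemma map_sub_smul_gradient_le (hL : 0 < L) (hF : Differentiable ℝ F)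
    (hlip : ∀ w w' : E, ‖gradient F w - gradient F w'‖ ≤ L * ‖w - w'‖) (x : E) :
    F (x - (1 / L) • gradient F x) ≤ F x - 1 / (2 * L) * ‖gradient F x‖ ^ 2 := by
  have h := le_add_inner_gradient_add_norm_sq hF hlip x (-((1 / L) • gradient F x))
  rw [← sub_eq_add_neg, inner_neg_right, real_inner_smul_right, real_inner_self_eq_norm_sq,
    norm_neg, norm_smul, Real.norm_of_nonneg (by positivity)] at h
  convert h using 1
  field_simp
  ring

lemma nesterov_energy_step (hL : 0 < L) (hF : Differentiable ℝ F)
    (hconv : ConvexOn ℝ univ F)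
    (hlip : ∀ w w' : E, ‖gradient F w - gradient F w'‖ ≤ L * ‖w - w'‖)
    (xstar w u z : E) {θ : ℝ} (hθ : 1 ≤ θ) (hz : z = (1 - 1 / θ) • w + (1 / θ) • u) :
    θ ^ 2 * (F (z - (1 / L) • gradient F z) - F xstar)
        + L / 2 * ‖u - (θ / L) • gradient F z - xstar‖ ^ 2
      ≤ θ * (θ - 1) * (F w - F xstar) + L / 2 * ‖u - xstar‖ ^ 2 := by
  have hdescent := map_sub_smul_gradient_le hL hF hlip z
  set g := gradient F z
  have hθ0 : θ ≠ 0 := by positivity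
  have hmomentum : (θ - 1) • (z - w) + (z - xstar) = u - xstar := by
    rw [hz]
    match_scalars <;> field_simp <;> ring
  have hconvex : θ * F z ≤ (θ - 1) * F w + F xstar + ⟪g, u - xstar⟫_ℝ := by
    have hw := hconv.add_inner_gradient_le (hF z) w
    have hstar := hconv.add_inner_gradient_le (hF z) xstar
    rw [← neg_sub z, inner_neg_right] at hw hstar
    rw [← hmomentum, inner_add_right, real_inner_smul_right]
    nlinarith [mul_le_mul_of_nonneg_left hw (sub_nonneg.2 hθ)]
  have hdist : L / 2 * ‖u - (θ / L) • g - xstar‖ ^ 2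
      = L / 2 * ‖u - xstar‖ ^ 2 - θ * ⟪g, u - xstar⟫_ℝ + θ ^ 2 / (2 * L) * ‖g‖ ^ 2 := by
    rw [sub_right_comm, norm_sub_sq_real, real_inner_smul_right, norm_smul,
      Real.norm_of_nonneg (by positivity), real_inner_comm]
    field_simp
  rw [hdist]
  linear_combination θ ^ 2 * hdescent + θ * hconvex

end Smooth

lemma sq_mul_add_le_of_energy_step {θ δ r : ℕ → ℝ} (hδ : ∀ t, 0 ≤ δ t) (hθ0 : θ 0 = 1)
    (hθ : ∀ t, θ (t + 1) * (θ (t + 1) - 1) ≤ θ t ^ 2)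
    (hstep : ∀ t, θ t ^ 2 * δ (t + 1) + r (t + 1) ≤ θ t * (θ t - 1) * δ t + r t) (t : ℕ) :
    θ t ^ 2 * δ (t + 1) + r (t + 1) ≤ r 0 := by
  induction t with
  | zero => simpa [hθ0] using hstep 0
  | succ t ih =>
    calc _ ≤ θ (t + 1) * (θ (t + 1) - 1) * δ (t + 1) + r (t + 1) := hstep (t + 1)
      _ ≤ θ t ^ 2 * δ (t + 1) + r (t + 1) := by gcongr; exacts [hδ _, hθ t]
      _ ≤ r 0 := ih

theorem nesterov_accelerated_rate {p : ℕ}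
    (F : EuclideanSpace ℝ (Fin p) → ℝ)
    (L : ℝ) (hL : 0 < L) (hdiff : Differentiable ℝ F)
    (hconv : ConvexOn ℝ Set.univ F)
    (hlip : ∀ w w' : EuclideanSpace ℝ (Fin p),
      ‖gradient F w - gradient F w'‖ ≤ L * ‖w - w'‖)
    (wstar : EuclideanSpace ℝ (Fin p)) (hmin : ∀ z, F wstar ≤ F z)
    (θ : ℕ → ℝ) (hθ : ∀ t : ℕ, θ t = ((t : ℝ) + 2) / 2)
    (w u z : ℕ → EuclideanSpace ℝ (Fin p)) (hinit : w 0 = u 0)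
    (hz : ∀ t, z t = (1 - 1 / θ t) • w t + (1 / θ t) • u t)
    (hw : ∀ t, w (t + 1) = z t - (1 / L) • gradient F (z t))
    (hu : ∀ t, u (t + 1) = u t - (θ t / L) • gradient F (z t)) :
    ∀ t : ℕ, 1 ≤ t →
      F (w t) - F wstar ≤ 2 * L * ‖w 0 - wstar‖ ^ 2 / ((t : ℝ) + 1) ^ 2 := by
  have hθ1 (t : ℕ) : 1 ≤ θ t := by
    rw [hθ]
    linarith [(t.cast_nonneg : (0 : ℝ) ≤ t)]
  have hstep (t : ℕ) : θ t ^ 2 * (F (w (t + 1)) - F wstar) + L / 2 * ‖u (t + 1) - wstar‖ ^ 2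
      ≤ θ t * (θ t - 1) * (F (w t) - F wstar) + L / 2 * ‖u t - wstar‖ ^ 2 := by
    simpa only [hw, hu] using
      nesterov_energy_step hL hdiff hconv hlip wstar (w t) (u t) (z t) (hθ1 t) (hz t)
  have hbound := sq_mul_add_le_of_energy_step (r := fun t ↦ L / 2 * ‖u t - wstar‖ ^ 2)
    (fun t ↦ sub_nonneg.2 (hmin (w t))) (by norm_num [hθ])
    (fun t ↦ by rw [hθ, hθ]; push_cast; nlinarith) hstep
  intro t ht
  obtain ⟨t, rfl⟩ := Nat.exists_eq_add_one.2 ht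
  have hgap := hbound t
  simp only [hθ, ← hinit] at hgap
  rw [le_div_iff₀ (by positivity)]
  push_cast
  nlinarith [sq_nonneg ‖u (t + 1) - wstar‖]
end
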